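/- For integers m ≥ 1, r ≥ 1, n ≥ 0: Σ_{l=1}^{m} [(-1)^{l+m} · l! · S(m,l) / (r+l-1)!] · Σ_{k=1}^{r+l-1} c(r+l-1, k) · B_n^{(-k)} = Σ_{l=1}^{m} (-1)^{l+m} · l! · S(m,l) · (r+l)^n. -/

import Mathlib

open Finset

/-- Stirling numbers of the second kind. -/
def S2 : ℕ → ℕ → ℕ
  | 0, 0 => 1
  | 0, _ + 1 => 0
  | _ + 1, 0 => 0
  | n + 1, k + 1 => S2 n k + (k + 1) * S2 n (k + 1)

/-- Unsigned Stirling numbers of the first kind. -/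
def S1 : ℕ → ℕ → ℕ
  | 0, 0 => 1
  | 0, _ + 1 => 0
  | _ + 1, 0 => 0
  | n + 1, k + 1 => S1 n k + n * S1 n (k + 1)

/-- Poly-Bernoulli number of negative index `B_n^{(-k)}` (closed power-sum formula). -/
def polyB (n k : ℕ) : ℤ :=
  ∑ l ∈ Finset.Icc 1 k, (-1 : ℤ) ^ (l + k) * (Nat.factorial l) * S2 k l * ((l : ℤ) + 1) ^ n

/-- Rising factorial `(r)_l = r (r+1) ⋯ (r+l-1)`. -/
def risingFact (r l : ℕ) : ℕ := ∏ i ∈ Finset.range l, (r + i)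

/-! For `N = r + l - 1 ≥ 1` the inner sum `∑ₖ c(N,k) B_n^{(-k)}` equals `N! (N+1)^n`: after
substituting the power-sum formula for `B_n^{(-k)}` and exchanging the sums, the orthogonality
`∑ₖ (-1)^(k+j) c(N,k) S(k,j) = δ_{N,j}` of the two kinds of Stirling numbers leaves only the term
`j = N`. Hence the identity holds term by term in `l`. -/

open Nat

theorem S1_eq_stirlingFirst : S1 = stirlingFirst := by
  funext n k
  induction n generalizing k with
  | zero => cases k <;> rfl
  | succ n ih =>
    cases k with
    | zero => rfl
    | succ k => rw [stirlingFirst_succ_succ, ← ih, ← ih]; exact add_comm _ _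

theorem S2_eq_stirlingSecond : S2 = stirlingSecond := by
  funext n k
  induction n generalizing k with
  | zero => cases k <;> rfl
  | succ n ih =>
    cases k with
    | zero => rfl
    | succ k => rw [stirlingSecond_succ_succ, ← ih, ← ih]; exact add_comm _ _

theorem sum_neg_one_pow_mul_stirlingFirst_mul_stirlingSecond (N j : ℕ) :
    ∑ k ∈ range (N + 1), (-1 : ℤ) ^ (k + j) * stirlingFirst N k * stirlingSecond k j =
      if N = j then 1 else 0 := by
  induction N generalizing j with
  | zero => cases j <;> simp
  | succ N ih =>
    cases j with
    | zero =>
      refine sum_eq_zero fun k _ => ?_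
      cases k <;> simp
    | succ j =>
      set g : ℕ → ℤ := fun k => (-1) ^ (k + (j + 1)) * stirlingFirst N k * stirlingSecond k (j + 1)
      set h : ℕ → ℤ := fun k => (-1) ^ (k + j) * stirlingFirst N k * stirlingSecond k j
      have hterm : ∀ k, (-1 : ℤ) ^ (k + 1 + (j + 1)) * stirlingFirst (N + 1) (k + 1) *
          stirlingSecond (k + 1) (j + 1) = N * g (k + 1) - (j + 1) * g k + h k := by
        intro k
        simp only [g, h, stirlingFirst_succ_succ, stirlingSecond_succ_succ]
        push_cast
        ring
      have hg_shift : ∑ k ∈ range (N + 1), g (k + 1) = ∑ k ∈ range (N + 1), g k := by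
        have hg_zero : g 0 = 0 := by simp [g]
        have hg_top : g (N + 1) = 0 := by simp [g, stirlingFirst_eq_zero_of_lt]
        have := sum_range_succ' g (N + 1)
        rw [sum_range_succ, hg_zero, hg_top] at this
        simpa using this.symm
      -- the recurrences give `A (N+1) (j+1) = (N - (j+1)) * A N (j+1) + A N j` for the sum `A`
      rw [sum_range_succ', stirlingFirst_succ_zero]
      simp only [hterm, sum_add_distrib, sum_sub_distrib, ← mul_sum, hg_shift]
      rw [ih, ih]
      split_ifs <;> omega

theorem sum_S1_mul_polyB (n N : ℕ) (hN : 1 ≤ N) :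
    ∑ k ∈ Icc 1 N, (S1 N k : ℤ) * polyB n k = N ! * ((N : ℤ) + 1) ^ n := by
  have hwiden : ∀ k ∈ Icc 1 N, polyB n k = ∑ j ∈ Icc 1 N,
      (-1 : ℤ) ^ (j + k) * j ! * stirlingSecond k j * ((j : ℤ) + 1) ^ n := by
    intro k hk
    rw [polyB, S2_eq_stirlingSecond]
    refine sum_subset (Icc_subset_Icc_right (mem_Icc.mp hk).2) fun j hj hjk => ?_
    simp [stirlingSecond_eq_zero_of_lt (by simp only [mem_Icc] at hj hjk; omega : k < j)]
  have horth : ∀ j, ∑ k ∈ Icc 1 N, (-1 : ℤ) ^ (k + j) * stirlingFirst N k * stirlingSecond k j =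
      if N = j then 1 else 0 := by
    intro j
    have hrange : range (N + 1) = insert 0 (Icc 1 N) := by
      ext x; simp only [mem_range, mem_insert, mem_Icc]; omega
    obtain ⟨M, rfl⟩ : ∃ M, N = M + 1 := ⟨N - 1, by omega⟩
    rw [← sum_neg_one_pow_mul_stirlingFirst_mul_stirlingSecond, hrange, sum_insert (by simp)]
    simp
  calc ∑ k ∈ Icc 1 N, (S1 N k : ℤ) * polyB n k
      = ∑ j ∈ Icc 1 N, (j ! * ((j : ℤ) + 1) ^ n) *
          ∑ k ∈ Icc 1 N, (-1 : ℤ) ^ (k + j) * stirlingFirst N k * stirlingSecond k j := by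
        rw [sum_congr rfl fun k hk => by rw [hwiden k hk], S1_eq_stirlingFirst]
        simp only [mul_sum]
        rw [sum_comm]
        refine sum_congr rfl fun j _ => sum_congr rfl fun k _ => ?_
        ring
    _ = N ! * ((N : ℤ) + 1) ^ n := by
        simp [horth, hN]

theorem stmt_9_general (m r n : ℕ) (hr : 1 ≤ r) :
    (∑ l ∈ Finset.Icc 1 m,
        ((-1 : ℚ) ^ (l + m) * (Nat.factorial l) * S2 m l / (Nat.factorial (r + l - 1) : ℚ)) *
          ∑ k ∈ Finset.Icc 1 (r + l - 1), (S1 (r + l - 1) k : ℚ) * (polyB n k : ℚ)) =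
      ∑ l ∈ Finset.Icc 1 m,
        (-1 : ℚ) ^ (l + m) * (Nat.factorial l) * S2 m l * ((r : ℚ) + l) ^ n := by
  refine sum_congr rfl fun l hl => ?_
  obtain ⟨N, hN⟩ : ∃ N, r + l = N + 1 := ⟨r + l - 1, by omega⟩
  have hinner : ∑ k ∈ Icc 1 N, (S1 N k : ℚ) * (polyB n k : ℚ) = N ! * ((r : ℚ) + l) ^ n := by
    have hcast : (r : ℚ) + l = N + 1 := by exact_mod_cast hN
    rw [hcast]
    exact_mod_cast sum_S1_mul_polyB n N (by simp only [mem_Icc] at hl; omega)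
  rw [show r + l - 1 = N by omega, hinner]
  field_simp [N.factorial_ne_zero]

theorem stmt_9 (m r n : ℕ) (hm : 1 ≤ m) (hr : 1 ≤ r) :
    (∑ l ∈ Finset.Icc 1 m,
        ((-1 : ℚ) ^ (l + m) * (Nat.factorial l) * S2 m l / (Nat.factorial (r + l - 1) : ℚ)) *
          ∑ k ∈ Finset.Icc 1 (r + l - 1), (S1 (r + l - 1) k : ℚ) * (polyB n k : ℚ)) =
      ∑ l ∈ Finset.Icc 1 m,
        (-1 : ℚ) ^ (l + m) * (Nat.factorial l) * S2 m l * ((r : ℚ) + l) ^ n :=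
  stmt_9_general m r n hr
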